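/- For every integer m ≥ 1, the identity -F_{2m}^6 - 3·F_{2m}^4 - 3·F_{2m+1}·F_{2m}^3 + 3·F_{2m+1}^3·F_{2m} + F_{2m-1}^3·F_{2m+1}^3 - 3·F_{2m+1}^3·F_{2m-1} = -2 holds over the integers. -/
import Mathlib

lemma cassini (n : ℕ) :
    ((Nat.fib (n+1) : ℤ))^2 - (Nat.fib (n+2) : ℤ) * (Nat.fib n : ℤ) = (-1)^n := by
  induction n with
  | zero => simp
  | succ k ih =>
    have h := Nat.fib_add_two (n := k+1)
    have h' := Nat.fib_add_two (n := k)
    push_cast [h, h'] at *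
    linear_combination -ih

theorem stmt7 (m : ℕ) (hm : 1 ≤ m) :
    -(Nat.fib (2*m) : ℤ)^6 - 3 * (Nat.fib (2*m) : ℤ)^4
      - 3 * (Nat.fib (2*m+1) : ℤ) * (Nat.fib (2*m) : ℤ)^3
      + 3 * (Nat.fib (2*m+1) : ℤ)^3 * (Nat.fib (2*m) : ℤ)
      + (Nat.fib (2*m-1) : ℤ)^3 * (Nat.fib (2*m+1) : ℤ)^3
      - 3 * (Nat.fib (2*m+1) : ℤ)^3 * (Nat.fib (2*m-1) : ℤ) = -2 := by
  obtain ⟨n, rfl⟩ := Nat.exists_eq_add_of_le hm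
  have e1 : 2 * (1 + n) - 1 = 2*n + 1 := by omega
  have e2 : 2 * (1 + n) = 2*n + 2 := by omega
  have e3 : 2 * (1 + n) + 1 = 2*n + 3 := by omega
  rw [e1, e2]
  set a : ℤ := (Nat.fib (2*n+2) : ℤ) with ha
  have e3 : 2*n+2+1 = 2*n+3 := rfl
  rw [e3]
  set b : ℤ := (Nat.fib (2*n+3) : ℤ) with hb
  set c : ℤ := (Nat.fib (2*n+1) : ℤ) with hc
  have h1 : a^2 - b * c = -1 := by
    have := cassini (2*n+1)
    simpa [pow_succ, pow_mul, ha, hb, hc] using this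
  have h2 : b = c + a := by
    rw [ha, hb, hc]
    have : Nat.fib (2*n+3) = Nat.fib (2*n+1) + Nat.fib (2*n+2) := Nat.fib_add_two
    push_cast [this]; ring
  have hcb : c = b - a := by linarith
  linear_combination (-(b^4 - 2*a*b^3 + 2*a^2*b^2 - 2*b^2 + 2*a*b - a^3*b + a^4 + 2*a^2 - 2)) * h1
    + (2*b - b^3 + b^3*c^2 + b^4*c - 2*a*b^2 - a*b^3*c - 2*a^2*b - a^2*b^3 + a^3*b^2 - a^4*b) * hcb
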